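/- For every positive integer n and every z_1,...,z_n on the unit circle, one has ∫_{−1}^{1} |x·g_n(x)| dx > 1/192, where g_n(x) = ∑_{k=1}^n 1/(x−z_k). In particular ∫_{−1}^{1} |g_n(x)| dx > 1/192. -/

import Mathlib

/-! For real `x` and `z ≠ x` on the unit circle, `Re (x / (x - z)) = (1 - P x z) / 2`, where
`P x z = (1 - x²) / ‖z - x‖²` is the Poisson kernel of the unit disc, so
`Re (x g(x)) = (n - ∑ₖ P x zₖ) / 2`. Near `x = 1` the kernel is governed by `qₖ = ‖1 - zₖ‖`:
`P ≥ 1 / (1 - x)` when `qₖ ≤ 1 - x`, `P ≥ (1 - x) / qₖ²` when `qₖ ≥ 1 - x`, and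
`P ≤ 8 (1 - x) / (3 qₖ²)` when `x ≥ 3/4`. With `V = ∑ₖ qₖ⁻²` there are three cases: some
`qⱼ ≤ 1/(4n)`, and then `Re (x g) ≤ -n/2` on an interval of length `1/(4n)`; or `V ≥ 9n²`, and
then `Re (x g) ≤ -n/4` on an interval of length `1/(12n)`; or `V < 9n²`, and then
`Re (x g) ≥ n/4` on `[1 - T, 1)` with `T = min (1/4) (3n / (16V)) > 1/(48n)`. -/

open MeasureTheory Set

lemma div_sub_eq_one_sub_herglotzRieszKernel_div_two {w z : ℂ} (h : w ≠ z) :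
    w / (w - z) = (1 - herglotzRieszKernel 0 w z) / 2 := by
  have hwz : w - z ≠ 0 := sub_ne_zero.2 h
  have hzw : z - w ≠ 0 := sub_ne_zero.2 h.symm
  simp only [herglotzRieszKernel_def, sub_zero]
  field_simp
  ring

lemma re_mul_sum_one_div_sub {ι : Type*} [Fintype ι] {w : ℂ} {z : ι → ℂ} (h : ∀ k, w ≠ z k) :
    (w * ∑ k, 1 / (w - z k)).re = (Fintype.card ι - ∑ k, poissonKernel 0 w (z k)) / 2 := by
  simp_rw [Finset.mul_sum, mul_one_div, div_sub_eq_one_sub_herglotzRieszKernel_div_two (h _),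
    Complex.re_sum, poissonKernel_eq_re_herglotzRieszKernel, Function.comp_apply]
  simp only [Complex.div_ofNat_re, Complex.sub_re, Complex.one_re]
  rw [← Finset.sum_div, Finset.sum_sub_distrib]
  simp

lemma poissonKernel_zero_ofReal {x : ℝ} {z : ℂ} (hz : ‖z‖ = 1) :
    poissonKernel 0 x z = (1 - x ^ 2) / ((1 - x) ^ 2 + x * ‖1 - z‖ ^ 2) := by
  have hz' : z.re * z.re + z.im * z.im = 1 := by
    rw [← Complex.normSq_apply, Complex.normSq_eq_norm_sq, hz, one_pow]
  simp only [poissonKernel_def, sub_zero, Complex.norm_real, Real.norm_eq_abs, sq_abs, hz,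
    one_pow, ← Complex.normSq_eq_norm_sq, Complex.normSq_apply]
  congr 1
  simp only [Complex.sub_re, Complex.sub_im, Complex.ofReal_re, Complex.ofReal_im,
    Complex.one_re, Complex.one_im]
  linear_combination (1 - x) * hz'

lemma poissonKernel_nonneg {w z : ℂ} (h : ‖w‖ ≤ ‖z‖) : 0 ≤ poissonKernel 0 w z := by
  rw [poissonKernel_def]
  simp only [sub_zero]
  exact div_nonneg (sub_nonneg.2 (pow_le_pow_left₀ (norm_nonneg w) h 2)) (sq_nonneg _)

lemma one_div_one_sub_le_poissonKernel {x : ℝ} {z : ℂ} (hz : ‖z‖ = 1) (hx0 : 0 ≤ x) (hx1 : x < 1)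
    (hzx : ‖1 - z‖ ≤ 1 - x) : 1 / (1 - x) ≤ poissonKernel 0 x z := by
  have hq : ‖1 - z‖ ^ 2 ≤ (1 - x) ^ 2 := pow_le_pow_left₀ (norm_nonneg _) hzx 2
  rw [poissonKernel_zero_ofReal hz, div_le_div_iff₀ (by linarith) (by positivity)]
  nlinarith [mul_le_mul_of_nonneg_left hq hx0]

lemma one_sub_div_le_poissonKernel {x : ℝ} {z : ℂ} (hz : ‖z‖ = 1) (hx0 : 0 ≤ x) (hx1 : x < 1)
    (hzx : 1 - x ≤ ‖1 - z‖) : (1 - x) / ‖1 - z‖ ^ 2 ≤ poissonKernel 0 x z := by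
  have hq : (1 - x) ^ 2 ≤ ‖1 - z‖ ^ 2 := pow_le_pow_left₀ (by linarith) hzx 2
  have hq0 : 0 < ‖1 - z‖ := by linarith
  rw [poissonKernel_zero_ofReal hz, div_le_div_iff₀ (by positivity) (by positivity)]
  nlinarith [mul_le_mul_of_nonneg_left hq (by linarith : (0:ℝ) ≤ 1 - x)]

lemma poissonKernel_le_mul_one_sub_div {x : ℝ} {z : ℂ} (hz : ‖z‖ = 1) (hz1 : z ≠ 1)
    (hx0 : 3 / 4 ≤ x) (hx1 : x ≤ 1) : poissonKernel 0 x z ≤ 8 / 3 * (1 - x) / ‖1 - z‖ ^ 2 := by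
  have hq0 : 0 < ‖1 - z‖ := norm_pos_iff.2 (sub_ne_zero.2 hz1.symm)
  rw [poissonKernel_zero_ofReal hz, div_le_div_iff₀ (by positivity) (by positivity)]
  nlinarith [sq_nonneg (1 - x), mul_nonneg (sub_nonneg.2 hx1) (sq_nonneg ‖1 - z‖),
    mul_nonneg (mul_nonneg (sub_nonneg.2 hx1) (sq_nonneg ‖1 - z‖)) (sq_nonneg (1 - x))]

lemma ofReal_mul_le_setLIntegral {f : ℝ → ℝ} {s : Set ℝ} {a b c : ℝ} (hc : 0 ≤ c)
    (hs : Ico a b ⊆ s) (hf : ∀ x ∈ Ico a b, c ≤ f x) :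
    ENNReal.ofReal (c * (b - a)) ≤ ∫⁻ x in s, ENNReal.ofReal (f x) :=
  calc ENNReal.ofReal (c * (b - a)) = ∫⁻ _ in Ico a b, ENNReal.ofReal c := by
        rw [setLIntegral_const, Real.volume_Ico, ENNReal.ofReal_mul hc]
    _ ≤ ∫⁻ x in Ico a b, ENNReal.ofReal (f x) :=
        setLIntegral_mono' measurableSet_Ico fun x hx => ENNReal.ofReal_le_ofReal (hf x hx)
    _ ≤ ∫⁻ x in s, ENNReal.ofReal (f x) := lintegral_mono_set hs

section

variable {ι : Type*} [Fintype ι] {z : ι → ℂ} {x : ℝ}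

lemma re_ofReal_mul_sum_one_div_sub (hz : ∀ k, ‖z k‖ = 1) (hx : |x| < 1) :
    ((x : ℂ) * ∑ k, 1 / ((x : ℂ) - z k)).re
      = (Fintype.card ι - ∑ k, poissonKernel 0 x (z k)) / 2 :=
  re_mul_sum_one_div_sub fun k hxz => by
    have := hz k
    rw [← hxz, Complex.norm_real, Real.norm_eq_abs] at this
    linarith

lemma re_mul_sum_le_of_norm_one_sub_le (hz : ∀ k, ‖z k‖ = 1) (hx0 : 0 ≤ x) (hx1 : x < 1) {j : ι}
    (hj : ‖1 - z j‖ ≤ 1 - x) :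
    ((x : ℂ) * ∑ k, 1 / ((x : ℂ) - z k)).re ≤ (Fintype.card ι - 1 / (1 - x)) / 2 := by
  rw [re_ofReal_mul_sum_one_div_sub hz (abs_lt.2 ⟨by linarith, hx1⟩)]
  have hxz : ∀ k, ‖(x : ℂ)‖ ≤ ‖z k‖ := fun k => by
    rw [hz k, Complex.norm_real, Real.norm_eq_abs, abs_le]
    constructor <;> linarith
  have hP : poissonKernel 0 x (z j) ≤ ∑ k, poissonKernel 0 x (z k) :=
    Finset.single_le_sum (fun k _ => poissonKernel_nonneg (hxz k)) (Finset.mem_univ j)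
  linarith [one_div_one_sub_le_poissonKernel (hz j) hx0 hx1 hj]

lemma re_mul_sum_le_of_forall_le_norm_one_sub (hz : ∀ k, ‖z k‖ = 1) (hx0 : 0 ≤ x) (hx1 : x < 1)
    (hk : ∀ k, 1 - x ≤ ‖1 - z k‖) :
    ((x : ℂ) * ∑ k, 1 / ((x : ℂ) - z k)).re
      ≤ (Fintype.card ι - (1 - x) * ∑ k, 1 / ‖1 - z k‖ ^ 2) / 2 := by
  rw [re_ofReal_mul_sum_one_div_sub hz (abs_lt.2 ⟨by linarith, hx1⟩)]
  have hP : ∑ k, (1 - x) / ‖1 - z k‖ ^ 2 ≤ ∑ k, poissonKernel 0 x (z k) :=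
    Finset.sum_le_sum fun k _ => one_sub_div_le_poissonKernel (hz k) hx0 hx1 (hk k)
  simp only [Finset.mul_sum, mul_one_div]
  linarith

lemma le_re_mul_sum (hz : ∀ k, ‖z k‖ = 1) (hz1 : ∀ k, z k ≠ 1) (hx0 : 3 / 4 ≤ x) (hx1 : x < 1) :
    (Fintype.card ι - 8 / 3 * (1 - x) * ∑ k, 1 / ‖1 - z k‖ ^ 2) / 2
      ≤ ((x : ℂ) * ∑ k, 1 / ((x : ℂ) - z k)).re := by
  rw [re_ofReal_mul_sum_one_div_sub hz (abs_lt.2 ⟨by linarith, hx1⟩)]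
  have hP : ∑ k, poissonKernel 0 x (z k) ≤ ∑ k, 8 / 3 * (1 - x) / ‖1 - z k‖ ^ 2 :=
    Finset.sum_le_sum fun k _ => poissonKernel_le_mul_one_sub_div (hz k) (hz1 k) hx0 hx1.le
  simp only [Finset.mul_sum, mul_one_div]
  linarith

lemma ofReal_le_lintegral_of_norm_one_sub_le (hz : ∀ k, ‖z k‖ = 1) {j : ι}
    (hj : ‖1 - z j‖ ≤ 1 / (4 * Fintype.card ι)) :
    ENNReal.ofReal (1 / 8) ≤
      ∫⁻ x in Icc (-1 : ℝ) 1, ENNReal.ofReal ‖(x : ℂ) * ∑ k, 1 / ((x : ℂ) - z k)‖ := by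
  set N : ℝ := (Fintype.card ι : ℝ)
  have hN : 1 ≤ N := Nat.one_le_cast.2 (Fintype.card_pos_iff.2 ⟨j⟩)
  have h4N : 0 < 1 / (4 * N) := by positivity
  have h2N : 1 / (2 * N) ≤ 1 / 2 := one_div_le_one_div_of_le two_pos (by linarith)
  have h42 : 1 / (4 * N) ≤ 1 / (2 * N) := one_div_le_one_div_of_le (by positivity) (by linarith)
  have h : ENNReal.ofReal (N / 2 * ((1 - 1 / (4 * N)) - (1 - 1 / (2 * N)))) ≤
      ∫⁻ x in Icc (-1 : ℝ) 1, ENNReal.ofReal ‖(x : ℂ) * ∑ k, 1 / ((x : ℂ) - z k)‖ := by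
    refine ofReal_mul_le_setLIntegral (by positivity) ?_ fun x hx => ?_
    · exact fun x hx => ⟨by linarith [hx.1], by linarith [hx.2]⟩
    obtain ⟨hxa, hxb⟩ := hx
    have hx1 : 0 < 1 - x := by linarith
    have hre := re_mul_sum_le_of_norm_one_sub_le hz (by linarith) (by linarith) (j := j)
      (by linarith)
    have hinv : 2 * N ≤ 1 / (1 - x) := by
      rw [le_div_iff₀ hx1, mul_comm, ← le_div_iff₀ (by positivity)]
      linarith
    linarith [(abs_le.1 (Complex.abs_re_le_norm ((x : ℂ) * ∑ k, 1 / ((x : ℂ) - z k)))).1]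
  convert h using 2
  field_simp
  ring

lemma ofReal_le_lintegral_of_le_sum_inv_norm_one_sub_sq [Nonempty ι] (hz : ∀ k, ‖z k‖ = 1)
    (hk : ∀ k, 1 / (4 * Fintype.card ι) < ‖1 - z k‖)
    (hV : 9 * (Fintype.card ι : ℝ) ^ 2 ≤ ∑ k, 1 / ‖1 - z k‖ ^ 2) :
    ENNReal.ofReal (1 / 48) ≤
      ∫⁻ x in Icc (-1 : ℝ) 1, ENNReal.ofReal ‖(x : ℂ) * ∑ k, 1 / ((x : ℂ) - z k)‖ := by
  set N : ℝ := (Fintype.card ι : ℝ)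
  have hN : 1 ≤ N := Nat.one_le_cast.2 Fintype.card_pos
  have h4N : 1 / (4 * N) ≤ 1 / 4 := one_div_le_one_div_of_le four_pos (by linarith)
  have h6N : 0 < 1 / (6 * N) := by positivity
  have h64 : 1 / (6 * N) ≤ 1 / (4 * N) := one_div_le_one_div_of_le (by positivity) (by linarith)
  have h : ENNReal.ofReal (N / 4 * ((1 - 1 / (6 * N)) - (1 - 1 / (4 * N)))) ≤
      ∫⁻ x in Icc (-1 : ℝ) 1, ENNReal.ofReal ‖(x : ℂ) * ∑ k, 1 / ((x : ℂ) - z k)‖ := by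
    refine ofReal_mul_le_setLIntegral (by positivity) ?_ fun x hx => ?_
    · exact fun x hx => ⟨by linarith [hx.1], by linarith [hx.2]⟩
    obtain ⟨hxa, hxb⟩ := hx
    have hre := re_mul_sum_le_of_forall_le_norm_one_sub hz (x := x) (by linarith) (by linarith)
      fun k => by linarith [hk k]
    have hx6 : 1 ≤ (1 - x) * (6 * N) := by
      rw [← div_le_iff₀ (by positivity)]
      linarith
    have hmass : 3 * N / 2 ≤ (1 - x) * ∑ k, 1 / ‖1 - z k‖ ^ 2 := by
      nlinarith [mul_le_mul_of_nonneg_left hV (by linarith : 0 ≤ 1 - x)]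
    linarith [(abs_le.1 (Complex.abs_re_le_norm ((x : ℂ) * ∑ k, 1 / ((x : ℂ) - z k)))).1]
  convert h using 2
  field_simp
  ring

lemma ofReal_lt_lintegral_of_sum_inv_norm_one_sub_sq_lt [Nonempty ι] (hz : ∀ k, ‖z k‖ = 1)
    (hz1 : ∀ k, z k ≠ 1) (hV : ∑ k, 1 / ‖1 - z k‖ ^ 2 < 9 * (Fintype.card ι : ℝ) ^ 2) :
    ENNReal.ofReal (1 / 192) <
      ∫⁻ x in Icc (-1 : ℝ) 1, ENNReal.ofReal ‖(x : ℂ) * ∑ k, 1 / ((x : ℂ) - z k)‖ := by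
  set N : ℝ := (Fintype.card ι : ℝ)
  set V : ℝ := ∑ k, 1 / ‖1 - z k‖ ^ 2
  have hN : 1 ≤ N := Nat.one_le_cast.2 Fintype.card_pos
  have hV0 : 0 < V := Finset.sum_pos (fun k _ => by
    have := norm_pos_iff.2 (sub_ne_zero.2 (hz1 k).symm); positivity) Finset.univ_nonempty
  set T := min (1 / 4) (3 * N / (16 * V))
  have hT : 1 / (48 * N) < T := lt_min
    (one_div_lt_one_div_of_lt four_pos (by linarith))
    (by rw [div_lt_div_iff₀ (by positivity) (by positivity)]; nlinarith)
  have hT4 : T ≤ 1 / 4 := min_le_left _ _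
  have hTV : 8 / 3 * T * V ≤ N / 2 := by
    have : T * (16 * V) ≤ 3 * N := (le_div_iff₀ (by positivity)).1 (min_le_right _ _)
    linarith
  refine lt_of_lt_of_le ?_ (ofReal_mul_le_setLIntegral (a := 1 - T) (b := 1) (c := N / 4)
    (by positivity) ?_ fun x hx => ?_)
  · have hT0 : 0 < T := lt_trans (by positivity) hT
    rw [sub_sub_cancel, ENNReal.ofReal_lt_ofReal_iff (by positivity)]
    rw [div_lt_iff₀ (by positivity)] at hT
    linarith
  · exact fun x hx => ⟨by linarith [hx.1], hx.2.le⟩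
  obtain ⟨hxa, hxb⟩ := hx
  have hre := le_re_mul_sum hz hz1 (x := x) (by linarith) hxb
  have : 8 / 3 * (1 - x) * V ≤ 8 / 3 * T * V := by
    gcongr
    linarith
  linarith [Complex.re_le_norm ((x : ℂ) * ∑ k, 1 / ((x : ℂ) - z k))]

end

theorem ofReal_lt_lintegral_norm_mul_sum_one_div_sub {ι : Type*} [Fintype ι] [Nonempty ι]
    {z : ι → ℂ} (hz : ∀ k, ‖z k‖ = 1) :
    ENNReal.ofReal (1 / 192) <
      ∫⁻ x in Icc (-1 : ℝ) 1, ENNReal.ofReal ‖(x : ℂ) * ∑ k, 1 / ((x : ℂ) - z k)‖ := by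
  by_cases hnear : ∃ j, ‖1 - z j‖ ≤ 1 / (4 * Fintype.card ι)
  · obtain ⟨j, hj⟩ := hnear
    exact lt_of_lt_of_le (by norm_num) (ofReal_le_lintegral_of_norm_one_sub_le hz hj)
  push Not at hnear
  by_cases hV : 9 * (Fintype.card ι : ℝ) ^ 2 ≤ ∑ k, 1 / ‖1 - z k‖ ^ 2
  · exact lt_of_lt_of_le (by norm_num)
      (ofReal_le_lintegral_of_le_sum_inv_norm_one_sub_sq hz hnear hV)
  have hz1 : ∀ k, z k ≠ 1 := fun k h => by
    have := hnear k
    rw [h, sub_self, norm_zero] at this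
    exact this.not_ge (by positivity)
  exact ofReal_lt_lintegral_of_sum_inv_norm_one_sub_sq_lt hz hz1 (not_le.1 hV)

theorem stmt11 (n : ℕ) (hn : 0 < n) (z : Fin n → ℂ) (hz : ∀ k, ‖z k‖ = 1) :
    (ENNReal.ofReal (1 / 192) <
      ∫⁻ x in Icc (-1 : ℝ) 1,
        ENNReal.ofReal ‖(x : ℂ) * ∑ k, 1 / ((x : ℂ) - z k)‖) ∧
    ENNReal.ofReal (1 / 192) <
      ∫⁻ x in Icc (-1 : ℝ) 1,
        ENNReal.ofReal ‖∑ k, 1 / ((x : ℂ) - z k)‖ := by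
  have : Nonempty (Fin n) := ⟨⟨0, hn⟩⟩
  have h := ofReal_lt_lintegral_norm_mul_sum_one_div_sub hz
  refine ⟨h, h.trans_le (setLIntegral_mono' measurableSet_Icc fun x hx => ?_)⟩
  refine ENNReal.ofReal_le_ofReal ?_
  rw [norm_mul, Complex.norm_real, Real.norm_eq_abs]
  exact mul_le_of_le_one_left (norm_nonneg _) (abs_le.2 hx)
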